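/- Let 1 ≤ p < ∞ and let B_u, B_v be the weighted backward shifts on X = ℓ_p(ℤ₊) associated with weight sequences u = (u_n)_{n≥1} and v = (v_n)_{n≥1}. Assume that either liminf_{n→∞} |u₁⋯u_n / (v₁⋯v_n)| = 0 or limsup_{n→∞} |u₁⋯u_n / (v₁⋯v_n)| = ∞. Then for any Borel probability measures m_u, m_v on X such that m_u is B_u-invariant, m_v is B_v-invariant, and m_u(ker e₀*) = 0 = m_v(ker e₀*), where e₀* is the first coordinate functional, the measures m_u and m_v are mutually singular. -/

import Mathlib

/-!
Write `α_n = ‖u₁⋯u_n‖` and `β_n = ‖v₁⋯v_n‖`. Since `(B_u^n x)₀ = u₁⋯u_n x_n`, invariance shows that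
under `m_u` the variable `α_n ‖x_n‖` has the law of `‖x₀‖`, and likewise for `m_v` with `β_n`.
As `m_u` does not charge `ker e₀*`, `m_u(‖x₀‖ < c)` is small for small `c`, while `m_v(‖x₀‖ ≥ s)`
is small for large `s`. If `α_n / β_n < c / s`, the set `{α_n ‖x_n‖ ≥ c}` is therefore almost full
for `m_u`, and almost null for `m_v` because it lies in `{β_n ‖x_n‖ ≥ s}`. The case
`limsup = ∞` is the case `liminf = 0` with `u` and `v` exchanged.
-/

open MeasureTheory Filter
open scoped ENNReal NNReal

noncomputable instance {𝕂 : Type*} [RCLike 𝕂] {p : ℝ≥0∞} [Fact (1 ≤ p)] :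
    MeasurableSpace (lp (fun _ : ℕ => 𝕂) p) := borel _

instance {𝕂 : Type*} [RCLike 𝕂] {p : ℝ≥0∞} [Fact (1 ≤ p)] :
    BorelSpace (lp (fun _ : ℕ => 𝕂) p) := ⟨rfl⟩

open Topology

namespace MeasureTheory.Measure

variable {α : Type*} {_ : MeasurableSpace α} {μ ν : Measure α}

theorem mutuallySingular_of_forall_exists_measure_compl_le
    (h : ∀ ε > 0, ∃ s, μ sᶜ ≤ ε ∧ ν s ≤ ε) : μ ⟂ₘ ν := by
  refine mutuallySingular_of_disjoint fun ξ hξμ hξν => ?_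
  rw [le_bot_iff]
  change ξ = 0
  rw [← measure_univ_eq_zero, ← nonpos_iff_eq_zero]
  refine ENNReal.le_of_forall_pos_le_add fun ε hε _ => ?_
  obtain ⟨s, hμs, hνs⟩ := h (ε / 2) (ENNReal.half_pos (by exact_mod_cast hε.ne'))
  calc ξ Set.univ ≤ ξ s + ξ sᶜ := measure_univ_le_add_compl s
    _ ≤ ν s + μ sᶜ := add_le_add (hξν s) (hξμ sᶜ)
    _ ≤ ε / 2 + ε / 2 := add_le_add hνs hμs
    _ = 0 + ε := by rw [ENNReal.add_halves, zero_add]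

end MeasureTheory.Measure

section NormTail

variable {α E : Type*} {_ : MeasurableSpace α} [NormedAddCommGroup E] [MeasurableSpace E]
  [OpensMeasurableSpace E] {μ : Measure α} [IsFiniteMeasure μ] {f : α → E}

theorem tendsto_measure_norm_lt_nhdsGT_zero (hf : Measurable f) :
    Tendsto (fun c : ℝ => μ {x | ‖f x‖ < c}) (𝓝[>] 0) (𝓝 (μ {x | f x = 0})) := by
  have hInter : (⋂ c > (0 : ℝ), {x | ‖f x‖ < c}) = {x | f x = 0} := by
    ext x
    simp only [Set.mem_iInter, Set.mem_ofPred_eq]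
    refine ⟨fun h => norm_le_zero_iff.mp (le_of_forall_gt fun c hc => h c hc), fun h c hc => ?_⟩
    simpa [h] using hc
  rw [← hInter]
  exact tendsto_measure_biInter_gt
    (fun c _ => (measurableSet_lt hf.norm measurable_const).nullMeasurableSet)
    (fun c d _ hcd x hx => lt_of_lt_of_le hx hcd) ⟨1, one_pos, measure_ne_top μ _⟩

theorem tendsto_measure_le_norm_atTop (hf : Measurable f) :
    Tendsto (fun s : ℝ => μ {x | s ≤ ‖f x‖}) atTop (𝓝 0) := by
  have hInter : (⋂ s : ℝ, {x | s ≤ ‖f x‖}) = ∅ := by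
    ext x
    simp only [Set.mem_iInter, Set.mem_ofPred_eq, Set.mem_empty_iff_false, iff_false, not_forall,
      not_le]
    exact ⟨‖f x‖ + 1, lt_add_one _⟩
  rw [← measure_empty (μ := μ), ← hInter]
  exact tendsto_measure_iInter_atTop
    (fun s => (measurableSet_le measurable_const hf.norm).nullMeasurableSet)
    (fun s t hst x (hx : t ≤ ‖f x‖) => hst.trans hx) ⟨0, measure_ne_top μ _⟩

end NormTail

theorem MeasureTheory.measurePreserving_of_measure_preimage {α β : Type*} [MeasurableSpace α]
    [MeasurableSpace β] {μ : Measure α} {ν : Measure β} {f : α → β} (hf : Measurable f)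
    (h : ∀ A, MeasurableSet A → μ (f ⁻¹' A) = ν A) : MeasurePreserving f μ ν :=
  ⟨hf, Measure.ext fun A hA => by rw [Measure.map_apply hf hA, h A hA]⟩

theorem lp.measurable_apply {𝕂 : Type*} [RCLike 𝕂] {p : ℝ≥0∞} [Fact (1 ≤ p)] (n : ℕ) :
    Measurable fun x : lp (fun _ : ℕ => 𝕂) p => (x : ℕ → 𝕂) n :=
  ((continuous_apply n).comp lp.uniformContinuous_coe.continuous).measurable

def IsWeightedBackwardShift {𝕂 : Type*} [RCLike 𝕂] {p : ℝ≥0∞} (w : ℕ → 𝕂)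
    (B : lp (fun _ : ℕ => 𝕂) p → lp (fun _ : ℕ => 𝕂) p) : Prop :=
  ∀ x n, (B x : ℕ → 𝕂) n = w (n + 1) * (x : ℕ → 𝕂) (n + 1)

namespace IsWeightedBackwardShift

variable {𝕂 : Type*} [RCLike 𝕂] {p : ℝ≥0∞} {w : ℕ → 𝕂}
  {B : lp (fun _ : ℕ => 𝕂) p → lp (fun _ : ℕ => 𝕂) p}

theorem iterate_apply_zero (hB : IsWeightedBackwardShift w B) (k : ℕ)
    (x : lp (fun _ : ℕ => 𝕂) p) :
    (B^[k] x : ℕ → 𝕂) 0 = (∏ i ∈ Finset.Icc 1 k, w i) * (x : ℕ → 𝕂) k := by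
  induction k generalizing x with
  | zero => simp
  | succ k ih =>
    rw [Function.iterate_succ_apply, ih, hB, Finset.prod_Icc_succ_top (Nat.le_add_left 1 k)]
    ring

theorem measure_norm_prod_mul_norm_apply_mem [Fact (1 ≤ p)]
    {μ : Measure (lp (fun _ : ℕ => 𝕂) p)} (hB : IsWeightedBackwardShift w B)
    (hμ : MeasurePreserving B μ μ) (k : ℕ) {S : Set ℝ} (hS : MeasurableSet S) :
    μ {x | ‖∏ i ∈ Finset.Icc 1 k, w i‖ * ‖(x : ℕ → 𝕂) k‖ ∈ S} = μ {x | ‖(x : ℕ → 𝕂) 0‖ ∈ S} := by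
  have hpre : {x : lp (fun _ : ℕ => 𝕂) p | ‖∏ i ∈ Finset.Icc 1 k, w i‖ * ‖(x : ℕ → 𝕂) k‖ ∈ S}
      = B^[k] ⁻¹' {x | ‖(x : ℕ → 𝕂) 0‖ ∈ S} := by
    ext x
    simp only [Set.mem_preimage, Set.mem_ofPred_eq, hB.iterate_apply_zero, norm_mul]
  rw [hpre, (hμ.iterate k).measure_preimage]
  exact ((lp.measurable_apply 0).norm hS).nullMeasurableSet

end IsWeightedBackwardShift

theorem mutuallySingular_of_frequently_norm_prod_div_lt {𝕂 : Type*} [RCLike 𝕂] {p : ℝ≥0∞}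
    [Fact (1 ≤ p)] {u v : ℕ → 𝕂}
    (hv0 : ∀ n, 1 ≤ n → v n ≠ 0) {Bu Bv : lp (fun _ : ℕ => 𝕂) p → lp (fun _ : ℕ => 𝕂) p}
    (hBu : IsWeightedBackwardShift u Bu) (hBv : IsWeightedBackwardShift v Bv)
    (hratio : ∀ ε : ℝ, 0 < ε → ∃ᶠ n in atTop,
        ‖∏ i ∈ Finset.Icc 1 n, u i‖ / ‖∏ i ∈ Finset.Icc 1 n, v i‖ < ε)
    {mu mv : Measure (lp (fun _ : ℕ => 𝕂) p)} [IsFiniteMeasure mu] [IsFiniteMeasure mv]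
    (hmu : MeasurePreserving Bu mu mu) (hmv : MeasurePreserving Bv mv mv)
    (hker : mu {x | (x : ℕ → 𝕂) 0 = 0} = 0) :
    mu ⟂ₘ mv := by
  refine Measure.mutuallySingular_of_forall_exists_measure_compl_le fun ε hε => ?_
  obtain ⟨c, hmuc, hc⟩ : ∃ c, mu {x | ‖(x : ℕ → 𝕂) 0‖ < c} ≤ ε ∧ 0 < c := by
    have h := tendsto_measure_norm_lt_nhdsGT_zero (μ := mu) (lp.measurable_apply 0)
    rw [hker] at h
    exact ((h.eventually (ge_mem_nhds hε)).and self_mem_nhdsWithin).exists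
  obtain ⟨s, hmvs, hs⟩ : ∃ s, mv {x | s ≤ ‖(x : ℕ → 𝕂) 0‖} ≤ ε ∧ 0 < s :=
    (((tendsto_measure_le_norm_atTop (μ := mv) (lp.measurable_apply 0)).eventually
      (ge_mem_nhds hε)).and (eventually_gt_atTop 0)).exists
  obtain ⟨n, hn⟩ := (hratio (c / s) (div_pos hc hs)).exists
  set α := ‖∏ i ∈ Finset.Icc 1 n, u i‖
  set β := ‖∏ i ∈ Finset.Icc 1 n, v i‖
  have hβ : 0 < β := norm_pos_iff.mpr <| Finset.prod_ne_zero_iff.mpr fun i hi =>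
    hv0 i (Finset.mem_Icc.mp hi).1
  have hαβ : α * s < c * β := (div_lt_div_iff₀ hβ hs).mp hn
  refine ⟨{x | α * ‖(x : ℕ → 𝕂) n‖ ∈ Set.Ici c}, ?_, ?_⟩
  · calc mu {x | α * ‖(x : ℕ → 𝕂) n‖ ∈ Set.Ici c}ᶜ
        = mu {x | α * ‖(x : ℕ → 𝕂) n‖ ∈ Set.Iio c} := by simp only [Set.compl_ofPred,
          Set.mem_Ici, Set.mem_Iio, not_le]
      _ = mu {x | ‖(x : ℕ → 𝕂) 0‖ ∈ Set.Iio c} :=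
        hBu.measure_norm_prod_mul_norm_apply_mem hmu n measurableSet_Iio
      _ ≤ ε := hmuc
  · calc mv {x | α * ‖(x : ℕ → 𝕂) n‖ ∈ Set.Ici c}
        ≤ mv {x | β * ‖(x : ℕ → 𝕂) n‖ ∈ Set.Ici s} := by
          refine measure_mono fun x (hx : c ≤ α * ‖(x : ℕ → 𝕂) n‖) => ?_
          show s ≤ β * ‖(x : ℕ → 𝕂) n‖
          nlinarith [norm_nonneg (∏ i ∈ Finset.Icc 1 n, u i), norm_nonneg ((x : ℕ → 𝕂) n)]
      _ = mv {x | ‖(x : ℕ → 𝕂) 0‖ ∈ Set.Ici s} :=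
        hBv.measure_norm_prod_mul_norm_apply_mem hmv n measurableSet_Ici
      _ ≤ ε := hmvs

theorem mutuallySingular_of_not_similar_general
    {𝕂 : Type*} [RCLike 𝕂] (p : ℝ≥0∞) [Fact (1 ≤ p)]
    (u v : ℕ → 𝕂) (hu0 : ∀ n, 1 ≤ n → u n ≠ 0) (hv0 : ∀ n, 1 ≤ n → v n ≠ 0)
    (Bu Bv : lp (fun _ : ℕ => 𝕂) p →L[𝕂] lp (fun _ : ℕ => 𝕂) p)
    (hBu : ∀ (x : lp (fun _ : ℕ => 𝕂) p) (n : ℕ),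
        (Bu x : ∀ _ : ℕ, 𝕂) n = u (n + 1) * (x : ∀ _ : ℕ, 𝕂) (n + 1))
    (hBv : ∀ (x : lp (fun _ : ℕ => 𝕂) p) (n : ℕ),
        (Bv x : ∀ _ : ℕ, 𝕂) n = v (n + 1) * (x : ∀ _ : ℕ, 𝕂) (n + 1))
    (hratio :
      (∀ ε : ℝ, 0 < ε → ∃ᶠ n in atTop,
          ‖∏ i ∈ Finset.Icc 1 n, u i‖ / ‖∏ i ∈ Finset.Icc 1 n, v i‖ < ε) ∨
      (∀ M : ℝ, ∃ᶠ n in atTop,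
          M < ‖∏ i ∈ Finset.Icc 1 n, u i‖ / ‖∏ i ∈ Finset.Icc 1 n, v i‖))
    (mu mv : Measure (lp (fun _ : ℕ => 𝕂) p))
    [IsProbabilityMeasure mu] [IsProbabilityMeasure mv]
    (hmu : ∀ A : Set (lp (fun _ : ℕ => 𝕂) p), MeasurableSet A → mu (Bu ⁻¹' A) = mu A)
    (hmv : ∀ A : Set (lp (fun _ : ℕ => 𝕂) p), MeasurableSet A → mv (Bv ⁻¹' A) = mv A)
    (hker_u : mu {x : lp (fun _ : ℕ => 𝕂) p | (x : ∀ _ : ℕ, 𝕂) 0 = 0} = 0)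
    (hker_v : mv {x : lp (fun _ : ℕ => 𝕂) p | (x : ∀ _ : ℕ, 𝕂) 0 = 0} = 0) :
    mu.MutuallySingular mv := by
  have hmu' := measurePreserving_of_measure_preimage Bu.continuous.measurable hmu
  have hmv' := measurePreserving_of_measure_preimage Bv.continuous.measurable hmv
  rcases hratio with hsmall | hlarge
  · exact mutuallySingular_of_frequently_norm_prod_div_lt hv0 hBu hBv hsmall hmu' hmv' hker_u
  · refine (mutuallySingular_of_frequently_norm_prod_div_lt hu0 hBv hBu
      (fun ε hε => (hlarge ε⁻¹).mono fun n hn => ?_) hmv' hmu' hker_v).symm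
    rw [← inv_div]
    exact inv_lt_of_inv_lt₀ hε hn

/-- If `liminf |u₁⋯u_n/(v₁⋯v_n)| = 0` or `limsup |u₁⋯u_n/(v₁⋯v_n)| = ∞`
(i.e. `B_u` and `B_v` are not similar), then invariant probability measures for `B_u`, `B_v`
not charging `ker e₀*` are mutually singular. -/
theorem mutuallySingular_of_not_similar
    {𝕂 : Type*} [RCLike 𝕂] (p : ℝ≥0∞) [Fact (1 ≤ p)] (hp : p ≠ ⊤)
    (u v : ℕ → 𝕂) (hu0 : ∀ n, 1 ≤ n → u n ≠ 0) (hv0 : ∀ n, 1 ≤ n → v n ≠ 0)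
    (hubdd : ∃ M : ℝ, ∀ n, ‖u n‖ ≤ M) (hvbdd : ∃ M : ℝ, ∀ n, ‖v n‖ ≤ M)
    (Bu Bv : lp (fun _ : ℕ => 𝕂) p →L[𝕂] lp (fun _ : ℕ => 𝕂) p)
    (hBu : ∀ (x : lp (fun _ : ℕ => 𝕂) p) (n : ℕ),
        (Bu x : ∀ _ : ℕ, 𝕂) n = u (n + 1) * (x : ∀ _ : ℕ, 𝕂) (n + 1))
    (hBv : ∀ (x : lp (fun _ : ℕ => 𝕂) p) (n : ℕ),
        (Bv x : ∀ _ : ℕ, 𝕂) n = v (n + 1) * (x : ∀ _ : ℕ, 𝕂) (n + 1))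
    (hratio :
      (∀ ε : ℝ, 0 < ε → ∃ᶠ n in atTop,
          ‖∏ i ∈ Finset.Icc 1 n, u i‖ / ‖∏ i ∈ Finset.Icc 1 n, v i‖ < ε) ∨
      (∀ M : ℝ, ∃ᶠ n in atTop,
          M < ‖∏ i ∈ Finset.Icc 1 n, u i‖ / ‖∏ i ∈ Finset.Icc 1 n, v i‖))
    (mu mv : Measure (lp (fun _ : ℕ => 𝕂) p))
    [IsProbabilityMeasure mu] [IsProbabilityMeasure mv]
    (hmu : ∀ A : Set (lp (fun _ : ℕ => 𝕂) p), MeasurableSet A → mu (Bu ⁻¹' A) = mu A)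
    (hmv : ∀ A : Set (lp (fun _ : ℕ => 𝕂) p), MeasurableSet A → mv (Bv ⁻¹' A) = mv A)
    (hker_u : mu {x : lp (fun _ : ℕ => 𝕂) p | (x : ∀ _ : ℕ, 𝕂) 0 = 0} = 0)
    (hker_v : mv {x : lp (fun _ : ℕ => 𝕂) p | (x : ∀ _ : ℕ, 𝕂) 0 = 0} = 0) :
    mu.MutuallySingular mv :=
  mutuallySingular_of_not_similar_general p u v hu0 hv0 Bu Bv hBu hBv hratio mu mv hmu hmv hker_u
    hker_v
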